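/- Let K ⊂ ℝ^d be nonempty compact and let ψ be a feedforward neural network with depth L ∈ ℕ, widths w_i ∈ ℕ, and continuous activation functions σ_i. Suppose σ_j is constant on some nonempty open interval I_j ⊂ ℝ for some j ∈ {1,…,L}, and suppose L: C(K) × C(K) → ℝ and y_T ∈ C(K) are such that the problem of minimizing L(z_c, y_T) over c ∈ ℝ, where z_c(x) = c, has a global solution. Then there exists a set E ⊂ D with Hausdorff dimension dim_H(E) ≥ m − 1 such that every element of E is a local minimum of the training problem (P) and L(Ψ(α), y_T) = min_{c ∈ ℝ} L(z_c, y_T) holds for all α ∈ E. -/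

import Mathlib

open scoped BigOperators ENNReal NNReal

/-- Parameter space `D` of a feedforward network with `L` hidden layers and width
function `w` (`w 0 = d` is the input dimension, hidden layer `i` has width `w i` for
`i = 1, …, L`, and the output layer has width one). The component for `i : Fin L`
consists of the weight matrix `A_{i+1}` and the bias vector `b_{i+1}`; the last
component consists of the output weights `A_{L+1}` and the output bias `b_{L+1}`. -/
abbrev Params (w : ℕ → ℕ) (L : ℕ) : Type :=
  (∀ i : Fin L, ((Fin (w (i + 1)) → Fin (w i) → ℝ) × (Fin (w (i + 1)) → ℝ))) ×
    ((Fin (w L) → ℝ) × ℝ)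

/-- The number of degrees of freedom `m = Σ_{i=1}^{L+1} w_i (w_{i-1} + 1)` of the
network (with `w_{L+1} = 1`). -/
def mdim (w : ℕ → ℕ) (L : ℕ) : ℕ :=
  (∑ i ∈ Finset.range L, w (i + 1) * (w i + 1)) + (w L + 1)

/-- Output of the first `k` hidden layers of the network. -/
noncomputable def hiddenOut (σ : ℕ → ℝ → ℝ) (w : ℕ → ℕ) (L : ℕ)
    (θ : ∀ i : Fin L, ((Fin (w (i + 1)) → Fin (w i) → ℝ) × (Fin (w (i + 1)) → ℝ))) :
    ∀ k : ℕ, k ≤ L → (Fin (w 0) → ℝ) → Fin (w k) → ℝ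
  | 0, _, x => x
  | k + 1, h, x => fun i =>
      σ (k + 1)
        ((∑ j, (θ ⟨k, h⟩).1 i j * hiddenOut σ w L θ k (Nat.le_of_succ_le h) x j) +
          (θ ⟨k, h⟩).2 i)

/-- The scalar output `ψ(α, x)` of the feedforward network. -/
noncomputable def netFun (σ : ℕ → ℝ → ℝ) (w : ℕ → ℕ) (L : ℕ) (α : Params w L)
    (x : Fin (w 0) → ℝ) : ℝ :=
  (∑ j, α.2.1 j * hiddenOut σ w L α.1 L le_rfl x j) + α.2.2

lemma continuous_hiddenOut {σ : ℕ → ℝ → ℝ} {w : ℕ → ℕ} {L : ℕ}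
    (hσ : ∀ i, 1 ≤ i → i ≤ L → Continuous (σ i))
    (θ : ∀ i : Fin L, ((Fin (w (i + 1)) → Fin (w i) → ℝ) × (Fin (w (i + 1)) → ℝ))) :
    ∀ (k : ℕ) (h : k ≤ L), Continuous fun x => hiddenOut σ w L θ k h x := by
  intro k
  induction k with
  | zero =>
      intro h
      first
        | exact (continuous_id : Continuous fun x : Fin (w 0) → ℝ => x)
        | (simp only [hiddenOut]; exact continuous_id)
  | succ k ih =>
      intro h
      apply continuous_pi
      intro i
      simp only [hiddenOut]
      exact (hσ (k + 1) (Nat.succ_le_succ (Nat.zero_le _)) h).comp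
        ((continuous_finset_sum _ fun j _ =>
          continuous_const.mul ((continuous_apply j).comp (ih (Nat.le_of_succ_le h)))).add
          continuous_const)

lemma continuous_netFun {σ : ℕ → ℝ → ℝ} {w : ℕ → ℕ} {L : ℕ}
    (hσ : ∀ i, 1 ≤ i → i ≤ L → Continuous (σ i)) (α : Params w L) :
    Continuous fun x => netFun σ w L α x := by
  unfold netFun
  exact (continuous_finset_sum _ fun j _ =>
    continuous_const.mul
      ((continuous_apply j).comp (continuous_hiddenOut hσ α.1 L le_rfl))).add continuous_const

/-- The parameter-to-realization map `Ψ : D → C(K)`. -/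
noncomputable def Psi (σ : ℕ → ℝ → ℝ) (w : ℕ → ℕ) (L : ℕ)
    (hσ : ∀ i, 1 ≤ i → i ≤ L → Continuous (σ i)) (K : Set (Fin (w 0) → ℝ))
    (α : Params w L) : C(K, ℝ) :=
  ⟨fun x => netFun σ w L α x, (continuous_netFun hσ α).comp continuous_subtype_val⟩

/-- The affine function `z_{a,c} : x ↦ aᵀ x + c` as an element of `C(K)`. -/
noncomputable def affineCM {n : ℕ} (K : Set (Fin n → ℝ)) (a : Fin n → ℝ) (c : ℝ) :
    C(K, ℝ) :=
  ⟨fun x => (∑ j, a j * (x : Fin n → ℝ) j) + c,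
    (continuous_finset_sum _ fun j _ =>
      continuous_const.mul ((continuous_apply j).comp continuous_subtype_val)).add
      continuous_const⟩

/-- The constant function `z_c : x ↦ c` as an element of `C(K)`. -/
noncomputable def constCM {n : ℕ} (K : Set (Fin n → ℝ)) (c : ℝ) : C(K, ℝ) :=
  ⟨fun _ => c, continuous_const⟩

/-- A function `ℝ → ℝ` is nonpolynomial if it is not the restriction of a polynomial. -/
def IsNonpolynomial (σ : ℝ → ℝ) : Prop :=
  ¬ ∃ p : Polynomial ℝ, ∀ x : ℝ, σ x = p.eval x

/-- `𝓛` is Gâteaux differentiable in its first argument at `(v, y)` with partial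
derivative (identified with an element of `M(K) = C(K)*`) given by the continuous
linear functional `T`. -/
def HasGateauxDerivFirst {n : ℕ} {K : Set (Fin n → ℝ)}
    (𝓛 : C(K, ℝ) → C(K, ℝ) → ℝ) (v y : C(K, ℝ)) (T : C(K, ℝ) →L[ℝ] ℝ) : Prop :=
  ∀ h : C(K, ℝ), Filter.Tendsto (fun s : ℝ => (𝓛 (v + s • h) y - 𝓛 v y) / s)
    (nhdsWithin 0 (Set.Ioi 0)) (nhds (T h))


/-!
If, for every input in `K`, all preactivations of layer `j` lie in the interval on which `σ_j`
is constant, then layer `j` outputs a constant vector and the network realizes a constant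
function on `K`. By compactness of `K` this condition on the hidden parameters is open, and it
holds for zero weights with biases at the midpoint of the interval. The output bias enters the
realization additively, so fixing it such that the constant is a best constant approximation
`c₀` cuts out a graph over an open subset of the remaining `m - 1` parameters. Each point of
this graph is a local minimum, since nearby parameters still realize constant functions.
-/

open Set

abbrev HiddenParams (w : ℕ → ℕ) (L : ℕ) : Type :=
  ∀ i : Fin L, (Fin (w (i + 1)) → Fin (w i) → ℝ) × (Fin (w (i + 1)) → ℝ)

lemma isOpen_setOf_forall_mem_of_isCompact {X Y Z : Type*} [TopologicalSpace X]
    [TopologicalSpace Y] [TopologicalSpace Z] {f : X × Y → Z} (hf : Continuous f) {K : Set Y}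
    (hK : IsCompact K) {U : Set Z} (hU : IsOpen U) : IsOpen {x | ∀ y ∈ K, f (x, y) ∈ U} :=
  isOpen_iff_mem_nhds.2 fun _ hx =>
    hK.eventually_forall_of_forall_eventually fun y hy => (hU.preimage hf).mem_nhds (hx y hy)

section Network

variable {σ : ℕ → ℝ → ℝ} {w : ℕ → ℕ} {L : ℕ}

noncomputable def preactivation (σ : ℕ → ℝ → ℝ) (w : ℕ → ℕ) (L : ℕ) (θ : HiddenParams w L)
    (k : ℕ) (hk : k < L) (x : Fin (w 0) → ℝ) : Fin (w (k + 1)) → ℝ :=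
  fun i => (∑ j, (θ ⟨k, hk⟩).1 i j * hiddenOut σ w L θ k hk.le x j) + (θ ⟨k, hk⟩).2 i

lemma hiddenOut_succ (θ : HiddenParams w L) (k : ℕ) (hk : k < L) (x : Fin (w 0) → ℝ) :
    hiddenOut σ w L θ (k + 1) hk x = fun i => σ (k + 1) (preactivation σ w L θ k hk x i) :=
  rfl

lemma continuous_hiddenOut_uncurry (hσ : ∀ i, 1 ≤ i → i ≤ L → Continuous (σ i)) :
    ∀ (k : ℕ) (hk : k ≤ L),
      Continuous fun q : HiddenParams w L × (Fin (w 0) → ℝ) => hiddenOut σ w L q.1 k hk q.2 := by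
  intro k
  induction k with
  | zero => exact fun _ => continuous_snd
  | succ k ih =>
    intro hk
    have := ih (Nat.le_of_succ_le hk)
    exact continuous_pi fun i => (hσ (k + 1) k.succ_pos hk).comp (by fun_prop)

lemma continuous_preactivation_uncurry (hσ : ∀ i, 1 ≤ i → i ≤ L → Continuous (σ i)) (k : ℕ)
    (hk : k < L) :
    Continuous fun q : HiddenParams w L × (Fin (w 0) → ℝ) =>
      preactivation σ w L q.1 k hk q.2 := by
  have := continuous_hiddenOut_uncurry (w := w) hσ k hk.le
  unfold preactivation
  fun_prop

lemma hiddenOut_eq_of_le {θ : HiddenParams w L} {x x' : Fin (w 0) → ℝ} {j : ℕ} (hj : j ≤ L)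
    (h : hiddenOut σ w L θ j hj x = hiddenOut σ w L θ j hj x') {k : ℕ} (hjk : j ≤ k)
    (hk : k ≤ L) : hiddenOut σ w L θ k hk x = hiddenOut σ w L θ k hk x' := by
  induction k, hjk using Nat.le_induction with
  | base => exact h
  | succ k _ ih => simp only [hiddenOut_succ, preactivation, ih (Nat.le_of_succ_le hk)]

lemma netFun_eq_of_hiddenOut_eq {α : Params w L} {x x' : Fin (w 0) → ℝ} {j : ℕ} (hj : j ≤ L)
    (h : hiddenOut σ w L α.1 j hj x = hiddenOut σ w L α.1 j hj x') :
    netFun σ w L α x = netFun σ w L α x' := by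
  simp only [netFun, hiddenOut_eq_of_le hj h hj le_rfl]

lemma netFun_eq_add_bias (θ : HiddenParams w L) (a : Fin (w L) → ℝ) (b : ℝ)
    (x : Fin (w 0) → ℝ) : netFun σ w L (θ, (a, b)) x = netFun σ w L (θ, (a, 0)) x + b := by
  simp only [netFun, add_zero]

lemma netFun_eq_of_preactivation_mem {I : Set ℝ} {γ : ℝ} {k : ℕ} (hk : k < L)
    (hσI : EqOn (σ (k + 1)) (fun _ => γ) I) {α : Params w L} {x x' : Fin (w 0) → ℝ}
    (hx : preactivation σ w L α.1 k hk x ∈ univ.pi fun _ => I)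
    (hx' : preactivation σ w L α.1 k hk x' ∈ univ.pi fun _ => I) :
    netFun σ w L α x = netFun σ w L α x' := by
  refine netFun_eq_of_hiddenOut_eq (j := k + 1) hk ?_
  ext i
  exact (hσI (hx i (mem_univ i))).trans (hσI (hx' i (mem_univ i))).symm

lemma isOpen_setOf_forall_preactivation_mem (hσ : ∀ i, 1 ≤ i → i ≤ L → Continuous (σ i))
    {k : ℕ} (hk : k < L) {K : Set (Fin (w 0) → ℝ)} (hK : IsCompact K) {I : Set ℝ}
    (hI : IsOpen I) :
    IsOpen {θ : HiddenParams w L | ∀ x ∈ K, preactivation σ w L θ k hk x ∈ univ.pi fun _ => I} :=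
  isOpen_setOf_forall_mem_of_isCompact (continuous_preactivation_uncurry hσ k hk) hK
    (isOpen_set_pi finite_univ fun _ _ => hI)

lemma finrank_hiddenParams_prod :
    Module.finrank ℝ (HiddenParams w L × (Fin (w L) → ℝ)) = mdim w L - 1 := by
  have hsum : ∑ i : Fin L, (w i * w (i + 1) + w (i + 1)) =
      ∑ i ∈ Finset.range L, w (i + 1) * (w i + 1) := by
    rw [Fin.sum_univ_eq_sum_range (fun i => w i * w (i + 1) + w (i + 1)) L]
    exact Finset.sum_congr rfl fun i _ => by ring
  simp [Module.finrank_prod, Module.finrank_pi_fintype, hsum, mdim, mul_comm]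

lemma le_dimH_setOf_netFun_eq {U : Set (HiddenParams w L)} (hU : IsOpen U)
    (hne : U.Nonempty) (x : Fin (w 0) → ℝ) (c : ℝ) :
    ((mdim w L - 1 : ℕ) : ℝ≥0∞) ≤ dimH {α : Params w L | α.1 ∈ U ∧ netFun σ w L α x = c} := by
  set Φ : HiddenParams w L × (Fin (w L) → ℝ) → Params w L :=
    fun p => (p.1, (p.2, c - netFun σ w L (p.1, (p.2, 0)) x))
  set π : Params w L →L[ℝ] HiddenParams w L × (Fin (w L) → ℝ) :=
    (ContinuousLinearMap.fst ℝ _ _).prod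
      ((ContinuousLinearMap.fst ℝ _ _).comp (ContinuousLinearMap.snd ℝ _ _))
  have hΦ : Φ '' (U ×ˢ univ) ⊆ {α | α.1 ∈ U ∧ netFun σ w L α x = c} := by
    rintro _ ⟨p, ⟨hpU, -⟩, rfl⟩
    exact ⟨hpU, by rw [netFun_eq_add_bias]; ring⟩
  have hUV : (interior (U ×ˢ (univ : Set (Fin (w L) → ℝ)))).Nonempty := by
    rw [(hU.prod isOpen_univ).interior_eq]
    exact hne.prod univ_nonempty
  calc ((mdim w L - 1 : ℕ) : ℝ≥0∞) = dimH (U ×ˢ (univ : Set (Fin (w L) → ℝ))) := by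
        rw [Real.dimH_of_nonempty_interior hUV, finrank_hiddenParams_prod]
    _ ≤ dimH (Φ '' (U ×ˢ univ)) := (π.lipschitz.to_rightInverse fun _ => rfl).le_dimH_image _
    _ ≤ _ := dimH_mono hΦ

end Network

theorem local_minima_from_constant_segments_general
    (w : ℕ → ℕ) (L : ℕ) (σ : ℕ → ℝ → ℝ)
    (hσ : ∀ i, 1 ≤ i → i ≤ L → Continuous (σ i))
    (K : Set (Fin (w 0) → ℝ)) (hKc : IsCompact K)
    (𝓛 : C(K, ℝ) → C(K, ℝ) → ℝ) (yT : C(K, ℝ))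
    -- some activation function is constant on a nonempty open interval
    (hconst : ∃ j, 1 ≤ j ∧ j ≤ L ∧ ∃ s t γ : ℝ, s < t ∧
      ∀ x ∈ Set.Ioo s t, σ j x = γ)
    -- existence of a constant best approximation
    (hmin : ∃ c₀ : ℝ, ∀ c : ℝ, 𝓛 (constCM K c₀) yT ≤ 𝓛 (constCM K c) yT) :
    ∃ E : Set (Params w L),
      (↑(mdim w L - 1) : ℝ≥0∞) ≤ dimH E ∧
      ∀ α ∈ E,
        -- `α` is a local minimum of (P)
        (∃ r > (0 : ℝ), ∀ β ∈ Metric.ball α r,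
          𝓛 (Psi σ w L hσ K α) yT ≤ 𝓛 (Psi σ w L hσ K β) yT) ∧
        -- the loss value at `α` equals `min_c 𝓛(z_c, y_T)`
        ((∀ c : ℝ, 𝓛 (Psi σ w L hσ K α) yT ≤ 𝓛 (constCM K c) yT) ∧
          ∃ c : ℝ, 𝓛 (Psi σ w L hσ K α) yT = 𝓛 (constCM K c) yT) := by
  obtain ⟨j, hj1, hjL, s, t, γ, hst, hγ⟩ := hconst
  obtain ⟨c₀, hc₀⟩ := hmin
  obtain ⟨k, rfl⟩ : ∃ k, j = k + 1 := ⟨j - 1, by omega⟩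
  -- `0` is added to `K` as a point at which the constant value of the network is read off.
  set U : Set (HiddenParams w L) :=
    {θ | ∀ x ∈ insert 0 K, preactivation σ w L θ k hjL x ∈ univ.pi fun _ => Ioo s t}
  have hUo : IsOpen U :=
    isOpen_setOf_forall_preactivation_mem hσ hjL (hKc.insert 0) isOpen_Ioo
  have hUne : U.Nonempty := ⟨fun _ => (0, fun _ => (s + t) / 2), fun x _ i _ => by
    simp only [preactivation, Pi.zero_apply, zero_mul, Finset.sum_const_zero, zero_add]
    constructor <;> linarith⟩
  have hPsi : ∀ α : Params w L, α.1 ∈ U → Psi σ w L hσ K α = constCM K (netFun σ w L α 0) :=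
    fun α hα => ContinuousMap.ext fun x =>
      netFun_eq_of_preactivation_mem hjL hγ (hα x (mem_insert_of_mem 0 x.2))
        (hα 0 (mem_insert 0 K))
  have hPsi_ge : ∀ α : Params w L, α.1 ∈ U → 𝓛 (constCM K c₀) yT ≤ 𝓛 (Psi σ w L hσ K α) yT :=
    fun α hα => hPsi α hα ▸ hc₀ _
  refine ⟨{α | α.1 ∈ U ∧ netFun σ w L α 0 = c₀}, le_dimH_setOf_netFun_eq hUo hUne 0 c₀, ?_⟩
  rintro α ⟨hαU, hα⟩
  have hPsiα : Psi σ w L hσ K α = constCM K c₀ := hα ▸ hPsi α hαU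
  obtain ⟨r, hr, hball⟩ := Metric.isOpen_iff.1 (hUo.preimage continuous_fst) α hαU
  exact ⟨⟨r, hr, fun β hβ => hPsiα ▸ hPsi_ge β (hball hβ)⟩, fun c => hPsiα ▸ hc₀ c, c₀,
    congrArg (𝓛 · yT) hPsiα⟩

/-- **Lemma 4.5.** If some activation function `σ_j` is constant on a nonempty open
interval and a constant best approximation of `y_T` with respect to `𝓛` exists, then
there is a set `E ⊆ D` of Hausdorff dimension at least `m - 1` all of whose elements
are local minima of the training problem (P) with loss value equal to
`min_c 𝓛(z_c, y_T)`. -/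
theorem local_minima_from_constant_segments
    (w : ℕ → ℕ) (L : ℕ) (hL : 0 < L) (hw0 : 0 < w 0) (hw : ∀ i, 1 ≤ i → i ≤ L → 0 < w i)
    (σ : ℕ → ℝ → ℝ)
    (hσ : ∀ i, 1 ≤ i → i ≤ L → Continuous (σ i))
    (K : Set (Fin (w 0) → ℝ)) (hKne : K.Nonempty) (hKc : IsCompact K)
    (𝓛 : C(K, ℝ) → C(K, ℝ) → ℝ) (yT : C(K, ℝ))
    -- some activation function is constant on a nonempty open interval
    (hconst : ∃ j, 1 ≤ j ∧ j ≤ L ∧ ∃ s t γ : ℝ, s < t ∧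
      ∀ x ∈ Set.Ioo s t, σ j x = γ)
    -- existence of a constant best approximation
    (hmin : ∃ c₀ : ℝ, ∀ c : ℝ, 𝓛 (constCM K c₀) yT ≤ 𝓛 (constCM K c) yT) :
    ∃ E : Set (Params w L),
      (↑(mdim w L - 1) : ℝ≥0∞) ≤ dimH E ∧
      ∀ α ∈ E,
        -- `α` is a local minimum of (P)
        (∃ r > (0 : ℝ), ∀ β ∈ Metric.ball α r,
          𝓛 (Psi σ w L hσ K α) yT ≤ 𝓛 (Psi σ w L hσ K β) yT) ∧
        -- the loss value at `α` equals `min_c 𝓛(z_c, y_T)`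
        ((∀ c : ℝ, 𝓛 (Psi σ w L hσ K α) yT ≤ 𝓛 (constCM K c) yT) ∧
          ∃ c : ℝ, 𝓛 (Psi σ w L hσ K α) yT = 𝓛 (constCM K c) yT) :=
  local_minima_from_constant_segments_general w L σ hσ K hKc 𝓛 yT hconst hmin
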